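/- L¹_r(ℓ²(H)) is a right ideal for the Schur product in M_r(ℓ²(H)): if A ∈ L¹_r(ℓ²(H)) and B ∈ M_r(ℓ²(H)), then B*A ∈ L¹_r(ℓ²(H)). -/

import Mathlib

/-!
Right Schur multipliers compose, with `‖B * A‖ ≤ ‖A‖ ‖B‖` in `M_r`. Testing a right multiplier
on a matrix unit bounds each of its entries by its multiplier norm, so `B * P` is again a matrix
polynomial when `P` is, and `B * A - B * P = B * (A - P)` has multiplier norm at most
`‖A - P‖ ‖B‖`, which is small when `P` approximates `A`.
-/

open Finset Filter

noncomputable section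

variable {H : Type*} [NormedAddCommGroup H] [InnerProductSpace ℂ H]
  [CompleteSpace H] [TopologicalSpace.SeparableSpace H]

/-- `A` defines a bounded operator on `ℓ²(H)` with norm at most `C`, expressed through
uniform bounds of the associated bilinear form on finitely supported sequences. -/
def SchurBoundedBy (A : ℕ → ℕ → (H →L[ℂ] H)) (C : ℝ) : Prop :=
  ∀ (F G : Finset ℕ) (x y : ℕ → H),
    ‖∑ k ∈ G, ∑ j ∈ F, (inner ℂ (A k j (x j)) (y k) : ℂ)‖ ≤
      C * Real.sqrt (∑ j ∈ F, ‖x j‖ ^ 2) * Real.sqrt (∑ k ∈ G, ‖y k‖ ^ 2)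

/-- `A ∈ B(ℓ²(H))`. -/
def MemB (A : ℕ → ℕ → (H →L[ℂ] H)) : Prop :=
  ∃ C, 0 ≤ C ∧ SchurBoundedBy A C

/-- The Schur product of two operator matrices: entrywise composition. -/
def schur (A B : ℕ → ℕ → (H →L[ℂ] H)) : ℕ → ℕ → (H →L[ℂ] H) :=
  fun k j => (A k j).comp (B k j)

/-- `A` is a right Schur multiplier with multiplier norm at most `C`. -/
def MrBoundedBy (A : ℕ → ℕ → (H →L[ℂ] H)) (C : ℝ) : Prop :=
  ∀ (B : ℕ → ℕ → (H →L[ℂ] H)) (D : ℝ), 0 ≤ D → SchurBoundedBy B D →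
    SchurBoundedBy (schur B A) (C * D)

/-- `A` is a left Schur multiplier with multiplier norm at most `C`. -/
def MlBoundedBy (A : ℕ → ℕ → (H →L[ℂ] H)) (C : ℝ) : Prop :=
  ∀ (B : ℕ → ℕ → (H →L[ℂ] H)) (D : ℝ), 0 ≤ D → SchurBoundedBy B D →
    SchurBoundedBy (schur A B) (C * D)

/-- `A ∈ M_r(ℓ²(H))`. -/
def MemMr (A : ℕ → ℕ → (H →L[ℂ] H)) : Prop :=
  ∃ C, 0 ≤ C ∧ MrBoundedBy A C

/-- `A ∈ M_l(ℓ²(H))`. -/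
def MemMl (A : ℕ → ℕ → (H →L[ℂ] H)) : Prop :=
  ∃ C, 0 ≤ C ∧ MlBoundedBy A C

/-- A matrix polynomial: supported on finitely many diagonals, with uniformly
bounded operator entries. -/
def IsMatPoly (A : ℕ → ℕ → (H →L[ℂ] H)) : Prop :=
  (∃ N : ℕ, ∀ k j : ℕ, N < ((j : ℤ) - (k : ℤ)).natAbs → A k j = 0) ∧
    ∃ M : ℝ, ∀ k j : ℕ, ‖A k j‖ ≤ M

/-- `A ∈ L¹_r(ℓ²(H))`: `A` is a right Schur multiplier lying in the closure of the
matrix polynomials in the right multiplier norm. -/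
def MemL1r (A : ℕ → ℕ → (H →L[ℂ] H)) : Prop :=
  MemMr A ∧ ∀ ε : ℝ, 0 < ε → ∃ P : ℕ → ℕ → (H →L[ℂ] H),
    IsMatPoly P ∧ MrBoundedBy (fun k j => A k j - P k j) ε

/-- `A ∈ L¹_l(ℓ²(H))`: `A` is a left Schur multiplier lying in the closure of the
matrix polynomials in the left multiplier norm. -/
def MemL1l (A : ℕ → ℕ → (H →L[ℂ] H)) : Prop :=
  MemMl A ∧ ∀ ε : ℝ, 0 < ε → ∃ P : ℕ → ℕ → (H →L[ℂ] H),
    IsMatPoly P ∧ MlBoundedBy (fun k j => A k j - P k j) ε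

theorem norm_le_sqrt_sum_sq {ι E : Type*} [SeminormedAddCommGroup E] {s : Finset ι} {i : ι}
    (hi : i ∈ s) (x : ι → E) : ‖x i‖ ≤ Real.sqrt (∑ j ∈ s, ‖x j‖ ^ 2) :=
  Real.le_sqrt_of_sq_le (single_le_sum (fun j _ => sq_nonneg ‖x j‖) hi)

section

variable {E : Type*} [NormedAddCommGroup E] [InnerProductSpace ℂ E]

theorem SchurBoundedBy.mono {A : ℕ → ℕ → (E →L[ℂ] E)} {C C' : ℝ}
    (hA : SchurBoundedBy A C) (h : C ≤ C') : SchurBoundedBy A C' := fun F G x y =>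
  (hA F G x y).trans <| by gcongr

theorem SchurBoundedBy.norm_apply_le {X : ℕ → ℕ → (E →L[ℂ] E)} {C : ℝ}
    (hX : SchurBoundedBy X C) (hC : 0 ≤ C) (k j : ℕ) : ‖X k j‖ ≤ C := by
  refine ContinuousLinearMap.opNorm_le_bound _ hC fun v => ?_
  have h := hX {j} {k} (fun _ => v) (fun _ => X k j v)
  simp only [sum_singleton, ← inner_self_re_eq_norm, inner_self_eq_norm_sq,
    Real.sqrt_sq (norm_nonneg _)] at h
  rcases (norm_nonneg (X k j v)).eq_or_lt with h0 | hpos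
  · rw [← h0]; positivity
  · nlinarith

def matrixUnit (k₀ j₀ : ℕ) : ℕ → ℕ → (E →L[ℂ] E) :=
  fun k j => if k = k₀ ∧ j = j₀ then ContinuousLinearMap.id ℂ E else 0

theorem schurBoundedBy_matrixUnit (k₀ j₀ : ℕ) :
    SchurBoundedBy (matrixUnit (E := E) k₀ j₀) 1 := by
  intro F G x y
  have hentry : ∀ k j, inner ℂ (matrixUnit k₀ j₀ k j (x j)) (y k) =
      if k = k₀ then if j = j₀ then inner ℂ (x j) (y k) else 0 else 0 := by
    intro k j
    simp only [matrixUnit]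
    split_ifs <;> simp_all
  simp only [hentry, sum_ite_irrel, sum_const_zero, sum_ite_eq', one_mul]
  split_ifs with hk hj
  · exact (norm_inner_le_norm _ _).trans <|
      mul_le_mul (norm_le_sqrt_sum_sq hj x) (norm_le_sqrt_sum_sq hk y) (norm_nonneg _)
        (Real.sqrt_nonneg _)
  all_goals rw [norm_zero]; positivity

theorem MrBoundedBy.mono {A : ℕ → ℕ → (E →L[ℂ] E)} {C C' : ℝ}
    (hA : MrBoundedBy A C) (h : C ≤ C') : MrBoundedBy A C' := fun B D hD hB =>
  (hA B D hD hB).mono (by gcongr)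

theorem MrBoundedBy.norm_apply_le {B : ℕ → ℕ → (E →L[ℂ] E)} {C : ℝ}
    (hB : MrBoundedBy B C) (hC : 0 ≤ C) (k j : ℕ) : ‖B k j‖ ≤ C := by
  have h := (hB _ 1 zero_le_one (schurBoundedBy_matrixUnit k j)).norm_apply_le (by simpa) k j
  simpa [schur, matrixUnit] using h

theorem mrBoundedBy_schur {A B : ℕ → ℕ → (E →L[ℂ] E)} {Ca Cb : ℝ}
    (hA : MrBoundedBy A Ca) (hB : MrBoundedBy B Cb) (hCb : 0 ≤ Cb) :
    MrBoundedBy (schur B A) (Ca * Cb) := fun X D hD hX =>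
  (hA (schur X B) (Cb * D) (mul_nonneg hCb hD) (hB X D hD hX)).mono (mul_assoc Ca Cb D).ge

theorem schur_sub_right (B A P : ℕ → ℕ → (E →L[ℂ] E)) :
    (fun k j => schur B A k j - schur B P k j) = schur B (fun k j => A k j - P k j) := by
  funext k j
  exact (ContinuousLinearMap.comp_sub _ _ _).symm

theorem IsMatPoly.schur_left {P B : ℕ → ℕ → (E →L[ℂ] E)} (hP : IsMatPoly P) {C : ℝ}
    (hB : ∀ k j, ‖B k j‖ ≤ C) (hC : 0 ≤ C) : IsMatPoly (schur B P) := by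
  obtain ⟨⟨N, hN⟩, M, hM⟩ := hP
  refine ⟨⟨N, fun k j h => by simp [schur, hN k j h]⟩, C * M, fun k j => ?_⟩
  exact (ContinuousLinearMap.opNorm_comp_le _ _).trans
    (mul_le_mul (hB k j) (hM k j) (norm_nonneg _) hC)

end

/-- `L¹_r(ℓ²(H))` is a right ideal for the Schur product in `M_r(ℓ²(H))`: if
`A ∈ L¹_r(ℓ²(H))` and `B ∈ M_r(ℓ²(H))`, then `B*A ∈ L¹_r(ℓ²(H))`. -/
theorem memL1r_schur_right_ideal (A B : ℕ → ℕ → (H →L[ℂ] H))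
    (hA : MemL1r A) (hB : MemMr B) : MemL1r (schur B A) := by
  obtain ⟨⟨Ca, hCa, hA⟩, hA_approx⟩ := hA
  obtain ⟨Cb, hCb, hB⟩ := hB
  refine ⟨⟨Ca * Cb, mul_nonneg hCa hCb, mrBoundedBy_schur hA hB hCb⟩, fun ε hε => ?_⟩
  obtain ⟨P, hP, hAP⟩ := hA_approx (ε / (Cb + 1)) (by positivity)
  refine ⟨schur B P, hP.schur_left (hB.norm_apply_le hCb) hCb, ?_⟩
  rw [schur_sub_right]
  refine (mrBoundedBy_schur hAP hB hCb).mono ?_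
  rw [div_mul_eq_mul_div, div_le_iff₀ (by positivity)]
  nlinarith
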